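/- For any balanced lattice design X ∈ U(n, q^s) with n ≥ 2, the benchmark word-length pattern (0, A_2*, …, A_s*) is dominated by (0, A_2(X), …, A_s(X)) in the aberration partial ordering: either A_j(X) = A_j* for all j = 2, …, s, or the smallest index j ∈ {2, …, s} with A_j(X) ≠ A_j* satisfies A_j* < A_j(X). Here A_j* = (1 − 1/n)[(1 − f) P_j(s − θ; s, q) + f P_j(s − θ − 1; s, q)] + (q−1)^j C(s, j)/n, with β̄ = s(n−q)/(q(n−1)), θ = ⌊β̄⌋, f = β̄ − θ. -/

import Mathlib

open Finset

/-- A design `X ∈ U(n, q^s)` is balanced: `q ∣ n` and every level occurs exactly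
`n / q` times in each column. -/
def IsBalanced {n s q : ℕ} (X : Fin n → Fin s → Fin q) : Prop :=
  q ∣ n ∧ ∀ (j : Fin s) (ℓ : Fin q),
    (univ.filter fun i => X i j = ℓ).card = n / q

/-- The contrast χ_v(X) = ∑_i ∏_j ω^{v_j x_{ij}}, with ω = exp(2πi/q). -/
noncomputable def contrast {n s q : ℕ} (X : Fin n → Fin s → Fin q)
    (v : Fin s → Fin q) : ℂ :=
  ∑ i, ∏ j, Complex.exp (2 * (Real.pi : ℂ) * Complex.I / (q : ℂ)) ^ ((v j : ℕ) * (X i j : ℕ))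

/-- The weight wt(v) = #{j : v_j ≠ 0}. -/
def wt {s q : ℕ} (v : Fin s → Fin q) : ℕ :=
  (univ.filter fun j => (v j : ℕ) ≠ 0).card

/-- The generalized word-length pattern A_k(X) = n⁻² ∑_{wt(v)=k} |χ_v(X)|². -/
noncomputable def wlp {n s q : ℕ} (X : Fin n → Fin s → Fin q) (k : ℕ) : ℝ :=
  (∑ v ∈ univ.filter (fun v : Fin s → Fin q => wt v = k),
    ‖contrast X v‖ ^ 2) / (n : ℝ) ^ 2

/-- The Krawtchouk polynomial P_j(l; s, q) = ∑_{w=0}^{j} (−1)^w (q−1)^{j−w} C(l,w) C(s−l,j−w). -/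
noncomputable def krawtchouk (s q j l : ℕ) : ℝ :=
  ∑ w ∈ range (j + 1),
    (-1 : ℝ) ^ w * ((q : ℝ) - 1) ^ (j - w) * (l.choose w : ℝ) * ((s - l).choose (j - w) : ℝ)

/-- The benchmark word-length pattern value
A_j* = (1 − 1/n)[(1 − f) P_j(s−θ; s, q) + f P_j(s−θ−1; s, q)] + (q−1)ʲ C(s,j)/n. -/
noncomputable def wlpBenchmark (n s q : ℕ) (θ : ℕ) (f : ℝ) (j : ℕ) : ℝ :=
  (1 - 1 / (n : ℝ)) *
      ((1 - f) * krawtchouk s q j (s - θ) + f * krawtchouk s q j (s - θ - 1))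
    + ((q : ℝ) - 1) ^ j * (s.choose j : ℝ) / n

/-!
By orthogonality of the characters `a ↦ ω ^ (a * y)`, the generating function `∑ⱼ n² A_j(X) xʲ`
equals `∑_{i,k} (1 + (q - 1) x) ^ β_ik (1 - x) ^ (s - β_ik)`, where `β_ik` is the coincidence of
rows `i` and `k` (a MacWilliams identity). The Krawtchouk generating function turns `∑ⱼ A_j* xʲ`
into the same expression with every off-diagonal coincidence replaced by the integers `θ`, `θ + 1`
bracketing `β̄`, with weights `1 - f`, `f`. For `0 ≤ x < 1` the map
`β ↦ (1 + (q - 1) x) ^ β (1 - x) ^ (s - β)` is convex, so it lies above its secant through `θ`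
and `θ + 1` at every integer; balance makes `β̄` the mean off-diagonal coincidence, so the
design's generating function dominates the benchmark's on `[0, 1)`. Both patterns start with
`A_0 = 1`, `A_1 = 0`, so the first nonzero coefficient of the difference is positive.
-/

lemma sum_fin_pow_eq_zero {R : Type*} [CommRing R] [IsDomain R] {u : R} {q : ℕ}
    (hu : u ≠ 1) (huq : u ^ q = 1) : ∑ a : Fin q, u ^ (a : ℕ) = 0 := by
  rw [Fin.sum_univ_eq_sum_range (u ^ ·)]
  have h := geom_sum_mul u q
  rw [huq, sub_self] at h
  exact (mul_eq_zero.1 h).resolve_right (sub_ne_zero.2 hu)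

lemma IsPrimitiveRoot.sum_pow_mul_conj_pow {ζ : ℂ} {q : ℕ} (hζ : IsPrimitiveRoot ζ q)
    (y z : Fin q) :
    ∑ a : Fin q, ζ ^ ((a : ℕ) * y) * starRingEnd ℂ (ζ ^ ((a : ℕ) * z)) =
      if y = z then (q : ℂ) else 0 := by
  have hq : q ≠ 0 := y.pos.ne'
  have hζ0 : ζ ≠ 0 := hζ.ne_zero hq
  set u := ζ ^ (y : ℕ) * (ζ ^ (z : ℕ))⁻¹
  have hterm : ∀ a : Fin q,
      ζ ^ ((a : ℕ) * y) * starRingEnd ℂ (ζ ^ ((a : ℕ) * z)) = u ^ (a : ℕ) := by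
    intro a
    rw [map_pow, ← Complex.inv_eq_conj (hζ.norm'_eq_one hq), mul_pow, inv_pow, inv_pow,
      ← pow_mul, ← pow_mul, mul_comm (y : ℕ), mul_comm (z : ℕ)]
  simp_rw [hterm]
  split_ifs with hyz
  · simp [u, hyz, hζ0]
  · refine sum_fin_pow_eq_zero ?_ ?_
    · rw [Ne, mul_inv_eq_one₀ (pow_ne_zero _ hζ0)]
      exact fun h => hyz (Fin.ext (hζ.pow_inj y.isLt z.isLt h))
    · rw [mul_pow, inv_pow, ← pow_mul, ← pow_mul, mul_comm _ q, mul_comm _ q, pow_mul, pow_mul,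
        hζ.pow_eq_one, one_pow, one_pow, inv_one, mul_one]

lemma IsPrimitiveRoot.sum_weight_mul_pow_mul_conj_pow {ζ : ℂ} {q : ℕ} (hζ : IsPrimitiveRoot ζ q)
    (x : ℂ) (y z : Fin q) :
    ∑ a : Fin q, (if (a : ℕ) ≠ 0 then x else 1) *
        (ζ ^ ((a : ℕ) * y) * starRingEnd ℂ (ζ ^ ((a : ℕ) * z))) =
      if y = z then 1 + ((q : ℂ) - 1) * x else 1 - x := by
  obtain ⟨p, rfl⟩ : ∃ p, q = p + 1 := Nat.exists_eq_succ_of_ne_zero y.pos.ne'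
  have h := hζ.sum_pow_mul_conj_pow y z
  rw [Fin.sum_univ_succ] at h ⊢
  simp only [Fin.val_zero, zero_mul, pow_zero, map_one, mul_one, Fin.val_succ,
    Nat.succ_ne_zero, ne_eq, not_false_eq_true, if_true, not_true_eq_false, if_false] at h ⊢
  rw [← Finset.mul_sum, eq_sub_of_add_eq' h]
  split_ifs <;> push_cast <;> ring

def coincidence {n s q : ℕ} (X : Fin n → Fin s → Fin q) (i k : Fin n) : ℕ :=
  #{t | X i t = X k t}

lemma coincidence_le {n s q : ℕ} (X : Fin n → Fin s → Fin q) (i k : Fin n) :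
    coincidence X i k ≤ s :=
  (card_filter_le _ _).trans_eq (card_fin s)

lemma coincidence_self {n s q : ℕ} (X : Fin n → Fin s → Fin q) (i : Fin n) :
    coincidence X i i = s := by
  simp [coincidence]

lemma prod_ite_eq_pow_coincidence {M : Type*} [CommMonoid M] {n s q : ℕ}
    (X : Fin n → Fin s → Fin q) (i k : Fin n) (a b : M) :
    ∏ t, (if X i t = X k t then a else b) =
      a ^ coincidence X i k * b ^ (s - coincidence X i k) := by
  have hcard := card_filter_add_card_filter_not (s := univ) fun t => X i t = X k t
  rw [card_univ, Fintype.card_fin] at hcard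
  rw [prod_ite, prod_const, prod_const, coincidence, ← Nat.eq_sub_of_add_eq' hcard]

lemma pow_wt_eq_prod {M : Type*} [CommMonoid M] {s q : ℕ} (v : Fin s → Fin q) (x : M) :
    x ^ wt v = ∏ t, if (v t : ℕ) ≠ 0 then x else 1 := by
  rw [prod_ite, prod_const, prod_const_one, mul_one, wt]

lemma sum_wlp_mul_pow {n s q : ℕ} (hq : q ≠ 0) (X : Fin n → Fin s → Fin q) (x : ℝ) :
    ∑ j ∈ range (s + 1), wlp X j * x ^ j =
      (∑ i, ∑ k, (1 + ((q : ℝ) - 1) * x) ^ coincidence X i k * (1 - x) ^ (s - coincidence X i k)) /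
        (n : ℝ) ^ 2 := by
  set ζ := Complex.exp (2 * (Real.pi : ℂ) * Complex.I / (q : ℂ))
  have hζ : IsPrimitiveRoot ζ q := Complex.isPrimitiveRoot_exp q hq
  have hfiber : ∑ j ∈ range (s + 1), wlp X j * x ^ j =
      (∑ v : Fin s → Fin q, ‖contrast X v‖ ^ 2 * x ^ wt v) / (n : ℝ) ^ 2 := by
    have hwt : ∀ v ∈ (univ : Finset (Fin s → Fin q)), wt v ∈ range (s + 1) := fun v _ =>
      mem_range.2 (Nat.lt_succ_of_le ((card_filter_le _ _).trans_eq (card_fin s)))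
    rw [← sum_fiberwise_of_maps_to hwt, sum_div]
    refine sum_congr rfl fun j _ => ?_
    rw [wlp, div_mul_eq_mul_div, sum_mul]
    congr 1
    exact sum_congr rfl fun v hv => by rw [(mem_filter.1 hv).2]
  rw [hfiber]
  congr 1
  apply Complex.ofReal_injective
  push_cast
  have hterm : ∀ v : Fin s → Fin q, (‖contrast X v‖ : ℂ) ^ 2 * (x : ℂ) ^ wt v =
      ∑ i, ∑ k, ∏ t, (if (v t : ℕ) ≠ 0 then (x : ℂ) else 1) *
        (ζ ^ ((v t : ℕ) * X i t) * starRingEnd ℂ (ζ ^ ((v t : ℕ) * X k t))) := by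
    intro v
    rw [← Complex.mul_conj', contrast, map_sum, sum_mul_sum, sum_mul, pow_wt_eq_prod]
    refine sum_congr rfl fun i _ => ?_
    rw [sum_mul]
    refine sum_congr rfl fun k _ => ?_
    rw [map_prod, ← prod_mul_distrib, ← prod_mul_distrib]
    exact prod_congr rfl fun t _ => by ring
  simp_rw [hterm]
  rw [sum_comm]
  refine sum_congr rfl fun i _ => ?_
  rw [sum_comm]
  refine sum_congr rfl fun k _ => ?_
  rw [← Fintype.prod_sum fun t (a : Fin q) => (if (a : ℕ) ≠ 0 then (x : ℂ) else 1) *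
    (ζ ^ ((a : ℕ) * X i t) * starRingEnd ℂ (ζ ^ ((a : ℕ) * X k t)))]
  simp_rw [hζ.sum_weight_mul_pow_mul_conj_pow, prod_ite_eq_pow_coincidence]

lemma wlp_zero {n s q : ℕ} (hq : q ≠ 0) (hn : n ≠ 0) (X : Fin n → Fin s → Fin q) :
    wlp X 0 = 1 := by
  have := NeZero.mk hq
  have hzero : ∀ v : Fin s → Fin q, wt v = 0 ↔ v = 0 := fun v => by
    simp only [wt, card_eq_zero, filter_eq_empty_iff, mem_univ, true_implies, not_not,
      funext_iff, Pi.zero_apply, Fin.ext_iff, Fin.val_zero]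
  simp [wlp, hzero, filter_eq', contrast, hn]

section Krawtchouk

open Polynomial

lemma coeff_one_add_C_mul_X_pow {R : Type*} [CommRing R] (c : R) (m k : ℕ) :
    ((1 + C c * X) ^ m).coeff k = c ^ k * (m.choose k : R) := by
  have h : (1 + C c * X) ^ m = ((1 + X) ^ m).comp (C c * X) := by simp
  rw [h, comp_C_mul_X_coeff, coeff_one_add_X_pow, mul_comm]

lemma krawtchouk_eq_coeff (s q j l : ℕ) :
    krawtchouk s q j l =
      ((1 + C (-1 : ℝ) * X) ^ l * (1 + C ((q : ℝ) - 1) * X) ^ (s - l)).coeff j := by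
  rw [coeff_mul, Finset.Nat.sum_antidiagonal_eq_sum_range_succ_mk]
  refine sum_congr rfl fun w _ => ?_
  simp only [coeff_one_add_C_mul_X_pow]
  ring

lemma sum_krawtchouk_mul_pow {s l : ℕ} (hl : l ≤ s) (q : ℕ) (x : ℝ) :
    ∑ j ∈ range (s + 1), krawtchouk s q j l * x ^ j =
      (1 - x) ^ l * (1 + ((q : ℝ) - 1) * x) ^ (s - l) := by
  have hdeg :
      ((1 + C (-1 : ℝ) * X) ^ l * (1 + C ((q : ℝ) - 1) * X) ^ (s - l)).natDegree < s + 1 := by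
    compute_degree
    omega
  simp_rw [krawtchouk_eq_coeff, ← eval_eq_sum_range' hdeg]
  simp only [eval_mul, eval_pow, eval_add, eval_one, eval_C, eval_X]
  ring

lemma krawtchouk_zero_right (s q j : ℕ) : krawtchouk s q j 0 = ((q : ℝ) - 1) ^ j * s.choose j := by
  rw [krawtchouk_eq_coeff, pow_zero, one_mul, Nat.sub_zero, coeff_one_add_C_mul_X_pow]

end Krawtchouk

lemma sum_wlpBenchmark_mul_pow {n s q θ : ℕ} (hθ : θ + 1 ≤ s) (f x : ℝ) :
    ∑ j ∈ range (s + 1), wlpBenchmark n s q θ f j * x ^ j =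
      (1 - 1 / (n : ℝ)) * ((1 - f) * ((1 + ((q : ℝ) - 1) * x) ^ θ * (1 - x) ^ (s - θ)) +
          f * ((1 + ((q : ℝ) - 1) * x) ^ (θ + 1) * (1 - x) ^ (s - (θ + 1)))) +
        (1 + ((q : ℝ) - 1) * x) ^ s / n := by
  have hexpand : ∀ j, wlpBenchmark n s q θ f j * x ^ j =
      (1 - 1 / (n : ℝ)) * (1 - f) * (krawtchouk s q j (s - θ) * x ^ j) +
        (1 - 1 / (n : ℝ)) * f * (krawtchouk s q j (s - (θ + 1)) * x ^ j) +
        1 / (n : ℝ) * (krawtchouk s q j 0 * x ^ j) := by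
    intro j
    rw [krawtchouk_zero_right, wlpBenchmark, Nat.sub_sub]
    ring
  simp_rw [hexpand, sum_add_distrib, ← mul_sum]
  rw [sum_krawtchouk_mul_pow (Nat.sub_le s θ), sum_krawtchouk_mul_pow (Nat.sub_le s (θ + 1)),
    sum_krawtchouk_mul_pow (Nat.zero_le s), Nat.sub_sub_self (by omega : θ ≤ s),
    Nat.sub_sub_self hθ, Nat.sub_zero]
  ring

lemma wlpBenchmark_zero (n s q θ : ℕ) (f : ℝ) : wlpBenchmark n s q θ f 0 = 1 := by
  simp [wlpBenchmark, krawtchouk]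

lemma wlpBenchmark_one {n s q θ : ℕ} (hq : q ≠ 0) (hn : 2 ≤ n) (hθ : θ + 1 ≤ s) {f : ℝ}
    (hf : f = (s : ℝ) * ((n : ℝ) - q) / ((q : ℝ) * ((n : ℝ) - 1)) - θ) :
    wlpBenchmark n s q θ f 1 = 0 := by
  have hkraw : ∀ l ≤ s, krawtchouk s q 1 l = ((q : ℝ) - 1) * (s - l) - l := by
    intro l hl
    simp only [krawtchouk, sum_range_succ, sum_range_zero, Nat.choose_zero_right,
      Nat.choose_one_right]
    norm_num [Nat.cast_sub hl]
    ring
  have hn1 : (n : ℝ) - 1 ≠ 0 := by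
    have : (2 : ℝ) ≤ n := by exact_mod_cast hn
    linarith
  have hq0 : (q : ℝ) ≠ 0 := by exact_mod_cast hq
  rw [wlpBenchmark, hkraw _ (Nat.sub_le s θ), hkraw _ (by omega), Nat.cast_sub (by omega),
    Nat.sub_sub, Nat.cast_sub hθ, Nat.choose_one_right, hf]
  push_cast
  field_simp
  ring

lemma IsBalanced.sum_column {n s q : ℕ} {X : Fin n → Fin s → Fin q} (hX : IsBalanced X)
    {M : Type*} [AddCommMonoid M] (t : Fin s) (F : Fin q → M) :
    ∑ i, F (X i t) = (n / q) • ∑ ℓ, F ℓ := by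
  rw [← sum_fiberwise_of_maps_to (fun i _ => mem_univ (X i t)), smul_sum]
  refine sum_congr rfl fun ℓ _ => ?_
  rw [sum_congr rfl fun i hi => by rw [(mem_filter.1 hi).2], sum_const, hX.2 t ℓ]

lemma IsBalanced.sum_coincidence {n s q : ℕ} {X : Fin n → Fin s → Fin q} (hX : IsBalanced X) :
    ∑ i, ∑ k, coincidence X i k = n * (s * (n / q)) := by
  have hrow : ∀ i, ∑ k, coincidence X i k = s * (n / q) := by
    intro i
    simp_rw [coincidence, card_filter]
    rw [sum_comm, sum_congr rfl fun t _ => hX.sum_column t fun ℓ => if X i t = ℓ then 1 else 0]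
    simp
  simp [hrow]

lemma IsBalanced.wlp_one {n s q : ℕ} {X : Fin n → Fin s → Fin q} (hX : IsBalanced X) :
    wlp X 1 = 0 := by
  rw [wlp, sum_eq_zero (fun v hv => ?_), zero_div]
  obtain ⟨t₀, ht₀⟩ := card_eq_one.1 (mem_filter.1 hv).2
  have hsupp : ∀ t, (v t : ℕ) ≠ 0 ↔ t = t₀ := fun t => by
    simpa using congrArg (t ∈ ·) ht₀
  have hq : q ≠ 0 := (v t₀).pos.ne'
  have hζ := Complex.isPrimitiveRoot_exp q hq
  set ζ := Complex.exp (2 * (Real.pi : ℂ) * Complex.I / (q : ℂ))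
  have hcontrast : contrast X v = (n / q) • ∑ ℓ : Fin q, (ζ ^ (v t₀ : ℕ)) ^ (ℓ : ℕ) := by
    rw [contrast, ← hX.sum_column t₀]
    refine sum_congr rfl fun i _ => ?_
    rw [prod_eq_single t₀ (fun t _ ht => by simp [not_not.1 (mt (hsupp t).1 ht)]) (by simp),
      pow_mul]
  have hv₀ : ζ ^ (v t₀ : ℕ) ≠ 1 :=
    hζ.pow_ne_one_of_pos_of_lt ((hsupp t₀).2 rfl) (v t₀).isLt
  have hv₀q : (ζ ^ (v t₀ : ℕ)) ^ q = 1 := by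
    rw [← pow_mul, mul_comm, pow_mul, hζ.pow_eq_one, one_pow]
  simp [hcontrast, sum_fin_pow_eq_zero hv₀ hv₀q]

lemma sum_sum_eq_sum_add_sum_offDiag {ι M : Type*} [Fintype ι] [DecidableEq ι] [AddCommMonoid M]
    (h : ι → ι → M) : ∑ i, ∑ k, h i k = ∑ i, h i i + ∑ p ∈ univ.offDiag, h p.1 p.2 := by
  rw [← sum_product' univ univ h, ← diag_union_offDiag, sum_union (disjoint_diag_offDiag _),
    sum_diag]

lemma IsBalanced.sum_offDiag_coincidence {n s q : ℕ} {X : Fin n → Fin s → Fin q}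
    (hX : IsBalanced X) (hq : q ≠ 0) :
    ∑ p ∈ univ.offDiag, (coincidence X p.1 p.2 : ℝ) = n * s * (n / q) - n * s := by
  have h := congrArg (Nat.cast (R := ℝ)) hX.sum_coincidence
  rw [Nat.cast_sum, sum_congr rfl fun i _ => Nat.cast_sum _ _, sum_sum_eq_sum_add_sum_offDiag,
    Nat.cast_mul, Nat.cast_mul, Nat.cast_div hX.1 (by exact_mod_cast hq)] at h
  simp only [coincidence_self, sum_const, card_univ, Fintype.card_fin, nsmul_eq_mul] at h
  linarith

lemma secant_le_of_monotone_sub {g : ℕ → ℝ} (hg : Monotone fun m => g (m + 1) - g m)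
    (θ β : ℕ) : g θ + ((β : ℝ) - θ) * (g (θ + 1) - g θ) ≤ g β := by
  have htelescope : ∀ m k, g (m + k) - g m = ∑ i ∈ range k, (g (m + i + 1) - g (m + i)) :=
    fun m k => by simpa [add_assoc] using (sum_range_sub (fun i => g (m + i)) k).symm
  rcases le_total θ β with h | h
  · obtain ⟨k, rfl⟩ := Nat.exists_eq_add_of_le h
    have hsum : (k : ℝ) * (g (θ + 1) - g θ) ≤ ∑ i ∈ range k, (g (θ + i + 1) - g (θ + i)) := by
      simpa using card_nsmul_le_sum (range k) _ _ fun i _ => hg (Nat.le_add_right θ i)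
    push_cast
    linarith [htelescope θ k]
  · obtain ⟨k, rfl⟩ := Nat.exists_eq_add_of_le h
    have hsum : ∑ i ∈ range k, (g (β + i + 1) - g (β + i)) ≤
        (k : ℝ) * (g (β + k + 1) - g (β + k)) := by
      simpa using sum_le_card_nsmul (range k) _ _ fun i hi =>
        hg (by simp only [mem_range] at hi; omega : β + i ≤ β + k)
    push_cast
    linarith [htelescope β k]

lemma monotone_mul_pow_succ_sub {c r : ℝ} (hc : 0 ≤ c) (hr : 1 ≤ r) :
    Monotone fun m : ℕ => c * r ^ (m + 1) - c * r ^ m := by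
  intro m m' hmm'
  simp only [pow_succ, ← mul_sub_one, ← mul_sub]
  exact mul_le_mul_of_nonneg_left
    (mul_le_mul_of_nonneg_right (pow_le_pow_right₀ hr hmm') (sub_nonneg.2 hr)) hc

lemma sum_secant_le_sum {ι : Type*} {g : ℕ → ℝ} (hg : Monotone fun m => g (m + 1) - g m)
    (S : Finset ι) (β : ι → ℕ) (θ : ℕ) :
    #S * g θ + (∑ i ∈ S, (β i : ℝ) - #S * θ) * (g (θ + 1) - g θ) ≤ ∑ i ∈ S, g (β i) := by
  calc #S * g θ + (∑ i ∈ S, (β i : ℝ) - #S * θ) * (g (θ + 1) - g θ)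
      = ∑ i ∈ S, (g θ + ((β i : ℝ) - θ) * (g (θ + 1) - g θ)) := by
        rw [sum_add_distrib, ← sum_mul, sum_sub_distrib]
        simp
    _ ≤ ∑ i ∈ S, g (β i) := sum_le_sum fun i _ => secant_le_of_monotone_sub hg θ (β i)

lemma IsBalanced.secant_le_sum_coincidence {n s q : ℕ} {X : Fin n → Fin s → Fin q}
    (hX : IsBalanced X) (hq : q ≠ 0) {g : ℕ → ℝ} (hg : Monotone fun m => g (m + 1) - g m)
    (θ : ℕ) :
    n * (n - 1) * g θ + (n * s * (n / q) - n * s - n * (n - 1) * θ) * (g (θ + 1) - g θ) +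
        n * g s ≤ ∑ i, ∑ k, g (coincidence X i k) := by
  have hsecant := sum_secant_le_sum hg univ.offDiag (fun p => coincidence X p.1 p.2) θ
  have hcard : (#(univ : Finset (Fin n)).offDiag : ℝ) = n * (n - 1) := by
    rw [offDiag_card, card_univ, Fintype.card_fin, Nat.cast_sub (Nat.le_mul_self n)]
    push_cast
    ring
  rw [hcard, hX.sum_offDiag_coincidence hq] at hsecant
  rw [sum_sum_eq_sum_add_sum_offDiag]
  simp only [coincidence_self, sum_const, card_univ, Fintype.card_fin, nsmul_eq_mul]
  linarith

lemma IsBalanced.sum_wlpBenchmark_mul_pow_le {n s q : ℕ} {X : Fin n → Fin s → Fin q}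
    (hX : IsBalanced X) (hq : q ≠ 0) (hn : 2 ≤ n) {θ : ℕ} (hθ : θ + 1 ≤ s) {f : ℝ}
    (hf : f = (s : ℝ) * ((n : ℝ) - q) / ((q : ℝ) * ((n : ℝ) - 1)) - θ) {x : ℝ} (hx₀ : 0 ≤ x)
    (hx₁ : x < 1) :
    ∑ j ∈ range (s + 1), wlpBenchmark n s q θ f j * x ^ j ≤
      ∑ j ∈ range (s + 1), wlp X j * x ^ j := by
  set a : ℝ := 1 + ((q : ℝ) - 1) * x
  set b : ℝ := 1 - x
  have hb : 0 < b := by linarith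
  have hab : 1 ≤ a / b := by
    have : (1 : ℝ) ≤ q := by exact_mod_cast Nat.one_le_iff_ne_zero.2 hq
    rw [le_div_iff₀ hb]
    nlinarith
  -- `g m = a ^ m * b ^ (s - m)` for `m ≤ s`; this form avoids the truncated `s - m` and makes
  -- the increments geometric on all of `ℕ`.
  set g : ℕ → ℝ := fun m => b ^ s * (a / b) ^ m
  have hg : Monotone fun m => g (m + 1) - g m := monotone_mul_pow_succ_sub (pow_nonneg hb.le s) hab
  have hgs : ∀ m ≤ s, g m = a ^ m * b ^ (s - m) := fun m hm => by
    simp only [g, div_pow]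
    rw [← Nat.sub_add_cancel hm, pow_add, Nat.sub_add_cancel hm]
    field_simp
  have hn0 : (n : ℝ) ≠ 0 := by positivity
  have hn1 : (n : ℝ) - 1 ≠ 0 := by
    have : (2 : ℝ) ≤ n := by exact_mod_cast hn
    linarith
  have hq0 : (q : ℝ) ≠ 0 := by exact_mod_cast hq
  have hsum := hX.secant_le_sum_coincidence hq hg θ
  rw [sum_congr rfl fun i _ => sum_congr rfl fun k _ => hgs _ (coincidence_le X i k),
    hgs θ (by omega), hgs (θ + 1) hθ, hgs s le_rfl, Nat.sub_self, pow_zero, mul_one] at hsum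
  rw [sum_wlpBenchmark_mul_pow hθ, sum_wlp_mul_pow hq, le_div_iff₀ (by positivity)]
  refine Eq.trans_le ?_ hsum
  rw [hf]
  field_simp
  ring

lemma nonneg_of_sum_mul_pow_nonneg {c : ℕ → ℝ} {N j₀ : ℕ} (hj₀ : j₀ < N)
    (hzero : ∀ k < j₀, c k = 0) (H : ∀ x ∈ Set.Ioo (0 : ℝ) 1, 0 ≤ ∑ j ∈ range N, c j * x ^ j) :
    0 ≤ c j₀ := by
  set F : ℝ → ℝ := fun x => ∑ i ∈ range (N - j₀), c (j₀ + i) * x ^ i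
  have hsplit : ∀ x, ∑ j ∈ range N, c j * x ^ j = x ^ j₀ * F x := fun x => by
    rw [← Nat.add_sub_cancel' hj₀.le, sum_range_add, sum_eq_zero fun k hk => by
      rw [hzero k (mem_range.1 hk), zero_mul], zero_add, mul_sum]
    exact sum_congr rfl fun i _ => by ring
  have hF : Set.Ioo 0 1 ⊆ {x | 0 ≤ F x} := fun x hx =>
    nonneg_of_mul_nonneg_right ((hsplit x).symm ▸ H x hx) (pow_pos hx.1 j₀)
  have hclosed : IsClosed {x | 0 ≤ F x} := isClosed_le continuous_const (by fun_prop)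
  have hF0 : 0 ≤ F 0 := hclosed.closure_subset_iff.2 hF
    (by rw [closure_Ioo zero_ne_one]; exact ⟨le_rfl, zero_le_one⟩)
  obtain ⟨r, hr⟩ : ∃ r, N - j₀ = r + 1 := ⟨N - j₀ - 1, by omega⟩
  simpa [F, hr, sum_range_succ'] using hF0

lemma aberration_of_sum_mul_pow_le {u v : ℕ → ℝ} {m s : ℕ} (hlow : ∀ k < m, u k = v k)
    (H : ∀ x ∈ Set.Ioo (0 : ℝ) 1,
      ∑ j ∈ range (s + 1), v j * x ^ j ≤ ∑ j ∈ range (s + 1), u j * x ^ j) :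
    (∀ j ∈ Icc m s, u j = v j) ∨
      ∃ j ∈ Icc m s, (∀ k ∈ Icc m s, k < j → u k = v k) ∧ u j ≠ v j ∧ v j < u j := by
  by_cases hall : ∀ j ∈ Icc m s, u j = v j
  · exact Or.inl hall
  right
  push Not at hall
  have hex : ∃ j, j ∈ Icc m s ∧ u j ≠ v j := hall
  obtain ⟨hj, hne⟩ := Nat.find_spec hex
  have hmin : ∀ k ∈ Icc m s, k < Nat.find hex → u k = v k := fun k hk hlt =>
    not_not.1 fun hne => Nat.find_min hex hlt ⟨hk, hne⟩
  refine ⟨Nat.find hex, hj, hmin, hne, lt_of_le_of_ne ?_ hne.symm⟩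
  rw [← sub_nonneg]
  refine nonneg_of_sum_mul_pow_nonneg (c := fun j => u j - v j)
    (Nat.lt_succ_of_le (mem_Icc.1 hj).2) (fun k hk => ?_)
    fun x hx => by simpa only [sub_mul, sum_sub_distrib, sub_nonneg] using H x hx
  rw [sub_eq_zero]
  rcases lt_or_ge k m with hkm | hkm
  · exact hlow k hkm
  · exact hmin k (mem_Icc.2 ⟨hkm, by linarith [(mem_Icc.1 hj).2]⟩) hk

lemma floor_avg_coincidence_lt {n s q : ℕ} (hq : 2 ≤ q) (hqn : q ≤ n) (hs : s ≠ 0) :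
    ⌊(s : ℝ) * ((n : ℝ) - q) / ((q : ℝ) * ((n : ℝ) - 1))⌋₊ < s := by
  have hq' : (2 : ℝ) ≤ q := by exact_mod_cast hq
  have hqn' : (q : ℝ) ≤ n := by exact_mod_cast hqn
  have hs' : (0 : ℝ) < s := by exact_mod_cast Nat.pos_of_ne_zero hs
  have hlt : (n : ℝ) - q < q * (n - 1) := by nlinarith
  rw [Nat.floor_lt' hs, div_lt_iff₀ (by nlinarith)]
  exact mul_lt_mul_of_pos_left hlt hs'

/-- Theorem 3 (benchmark for the word-length pattern): the benchmark pattern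
(0, A_2*, …, A_s*) is dominated by (0, A_2(X), …, A_s(X)) under the aberration partial
ordering: either all entries agree, or at the first index where they differ,
the benchmark is strictly smaller. -/
theorem wlp_benchmark_aberration (n s q : ℕ) (hq : 2 ≤ q) (hn : 2 ≤ n)
    (X : Fin n → Fin s → Fin q) (hX : IsBalanced X)
    (βbar : ℝ) (hβbar : βbar = (s : ℝ) * ((n : ℝ) - q) / ((q : ℝ) * ((n : ℝ) - 1)))
    (θ : ℕ) (hθ : θ = ⌊βbar⌋₊)
    (f : ℝ) (hf : f = βbar - θ) :
    (∀ j ∈ Icc 2 s, wlp X j = wlpBenchmark n s q θ f j) ∨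
      (∃ j ∈ Icc 2 s, (∀ k ∈ Icc 2 s, k < j → wlp X k = wlpBenchmark n s q θ f k) ∧
        wlp X j ≠ wlpBenchmark n s q θ f j ∧ wlpBenchmark n s q θ f j < wlp X j) := by
  subst hβbar
  have hq0 : q ≠ 0 := by omega
  rcases Nat.lt_or_ge s 2 with hs | hs
  · exact Or.inl fun j hj => absurd (mem_Icc.1 hj) (by omega)
  have hθs : θ + 1 ≤ s :=
    hθ ▸ floor_avg_coincidence_lt hq (Nat.le_of_dvd (by omega) hX.1) (by omega)
  refine aberration_of_sum_mul_pow_le (fun k hk => ?_)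
    fun x hx => hX.sum_wlpBenchmark_mul_pow_le hq0 hn hθs hf hx.1.le hx.2
  interval_cases k
  · rw [wlp_zero hq0 (by omega), wlpBenchmark_zero]
  · rw [hX.wlp_one, wlpBenchmark_one hq0 hn hθs hf]
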